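/- Let (R, m, k) be a Noetherian local ring with depth R = 0 and let M be a finitely generated R-module. If L is a non-zero R-module that is a homomorphic image of a finite direct sum of syzygy modules ⨁_{n∈Λ} (Ω_n^R(M))^{j_n}, where Λ is a finite set of integers n ≥ 1 and the j_n are positive integers, then L is not a semidualizing R-module. -/

import Mathlib

/- Background definitions: Ext/Tor vanishing, semidualizing modules, finite injective
dimension, depth, Cohen–Macaulay local rings, maximal Cohen–Macaulay modules, minimal
syzygies, length, Hilbert–Samuel function, minimal multiplicity, and regular/Gorenstein
local rings. -/

open CategoryTheory IsLocalRing TensorProduct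

noncomputable section

/-- Vanishing of `Ext_R^i(M, N)`. -/
def ExtVanishes (R : Type) [CommRing R] (M N : ModuleCat.{0} R) (i : ℕ) : Prop :=
  Subsingleton (((Ext R (ModuleCat R) i).obj (Opposite.op M)).obj N)

/-- Vanishing of `Tor_i^R(M, N)`. -/
def TorVanishes (R : Type) [CommRing R] (M N : ModuleCat.{0} R) (i : ℕ) : Prop :=
  Subsingleton (((Tor (ModuleCat R) i).obj M).obj N)

/-- `C` is a semidualizing `R`-module: `C` is finitely generated, the natural map
`R → Hom_R(C, C)`, `r ↦ r • ·`, is bijective, and `Ext_R^i(C, C) = 0` for all `i ≥ 1`. -/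
def IsSemidualizing (R : Type) [CommRing R] (C : Type) [AddCommGroup C] [Module R C] : Prop :=
  Module.Finite R C ∧ Function.Bijective (LinearMap.lsmul R C) ∧
    ∀ i : ℕ, 1 ≤ i → ExtVanishes R (ModuleCat.of R C) (ModuleCat.of R C) i

/-- `M` has finite injective dimension: there is an `n` such that `Ext_R^i(N, M) = 0`
for all `i > n` and all modules `N`. -/
def HasFiniteInjDim (R : Type) [CommRing R] (M : Type) [AddCommGroup M] [Module R M] : Prop :=
  ∃ n : ℕ, ∀ (N : ModuleCat.{0} R) (i : ℕ), n < i → ExtVanishes R N (ModuleCat.of R M) i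

/-- The depth of a module over a local ring: the supremum of the lengths of `M`-regular
sequences contained in the maximal ideal. -/
def moduleDepth (R : Type) [CommRing R] [IsLocalRing R]
    (M : Type) [AddCommGroup M] [Module R M] : ℕ∞ :=
  sSup {n : ℕ∞ | ∃ rs : List R, (rs.length : ℕ∞) = n ∧ (∀ r ∈ rs, r ∈ maximalIdeal R) ∧
    RingTheory.Sequence.IsRegular M rs}

/-- A Noetherian local ring is Cohen–Macaulay if its depth equals its Krull dimension. -/
def IsCohenMacaulayLocalRing (R : Type) [CommRing R] [IsLocalRing R] : Prop :=
  IsNoetherianRing R ∧ (moduleDepth R R : WithBot ℕ∞) = ringKrullDim R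

/-- A module over a local ring is maximal Cohen–Macaulay if its depth equals the Krull
dimension of the ring. -/
def IsMaximalCohenMacaulay (R : Type) [CommRing R] [IsLocalRing R]
    (M : Type) [AddCommGroup M] [Module R M] : Prop :=
  (moduleDepth R M : WithBot ℕ∞) = ringKrullDim R

/-- `S` is an `n`-th syzygy of `M` in a minimal free resolution: `Ω_0(M) = M`, and
`Ω_{n+1}(M) = Ω_n(ker f)` for a minimal free cover `f : F → M` (i.e. `F` finite free,
`f` surjective, and `ker f ⊆ m F`, which characterizes the covers occurring in a minimal
free resolution). -/
def IsMinimalSyzygy (R : Type) [CommRing R] [IsLocalRing R] :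
    ℕ → ModuleCat.{0} R → ModuleCat.{0} R → Prop
  | 0, M, S => Nonempty (S ≃ₗ[R] M)
  | n + 1, M, S =>
      ∃ (F : ModuleCat.{0} R) (f : F ⟶ M), Module.Free R F ∧ Module.Finite R F ∧
        Function.Surjective f ∧
        LinearMap.ker f.hom ≤ (maximalIdeal R) • (⊤ : Submodule R F) ∧
        IsMinimalSyzygy R n (ModuleCat.of R (LinearMap.ker f.hom)) S

/-- `L` is a homomorphic image of a finite direct sum of syzygy modules `Ω_n^R(M)`,
where all occurring indices `n` satisfy `lo ≤ n` (multiplicities are accounted for by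
repetitions in the finite index type). -/
def IsQuotOfSyzygies (R : Type) [CommRing R] [IsLocalRing R]
    (M : Type) [AddCommGroup M] [Module R M]
    (L : Type) [AddCommGroup L] [Module R L] (lo : ℕ) : Prop :=
  ∃ (ι : Type) (_ : Fintype ι) (n : ι → ℕ) (S : ι → ModuleCat.{0} R),
    (∀ i, lo ≤ n i) ∧
    (∀ i, IsMinimalSyzygy R (n i) (ModuleCat.of R M) (S i)) ∧
    ∃ g : (DirectSum ι fun i => S i) →ₗ[R] L, Function.Surjective g

/-- The minimal number of generators `μ(I)` of an ideal. -/
def minGens (R : Type) [CommRing R] (I : Ideal R) : ℕ :=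
  sInf {n : ℕ | ∃ s : Finset R, s.card = n ∧ Ideal.span (s : Set R) = I}

/-- The length of a module, i.e. the Krull dimension of its lattice of submodules. -/
def moduleLength (R : Type) [CommRing R] (M : Type) [AddCommGroup M] [Module R M] : ℕ :=
  (WithBot.unbotD 0 (Order.krullDim (Submodule R M))).toNat

/-- The Hilbert–Samuel function of a local ring: `n ↦ λ_R(R / m^{n+1})`. -/
def hilbertSamuel (R : Type) [CommRing R] [IsLocalRing R] (n : ℕ) : ℕ :=
  moduleLength R (R ⧸ (maximalIdeal R ^ (n + 1)))

/-- A `d`-dimensional Cohen–Macaulay local ring has minimal multiplicity if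
`e(R) = μ(m) - d + 1`, where the Hilbert–Samuel multiplicity `e(R)` is `d!` times the
degree-`d` coefficient of the Hilbert–Samuel polynomial of `R`. -/
def HasMinimalMultiplicity (R : Type) [CommRing R] [IsLocalRing R] (d : ℕ) : Prop :=
  ∃ P : Polynomial ℚ,
    (∀ᶠ n : ℕ in Filter.atTop, (hilbertSamuel R n : ℚ) = P.eval (n : ℚ)) ∧
    (d.factorial : ℚ) * P.coeff d = (minGens R (maximalIdeal R) : ℚ) - d + 1

/-- A Noetherian local ring is regular if its maximal ideal can be generated by
`dim R` elements. -/
def IsRegularLocalRing' (R : Type) [CommRing R] [IsLocalRing R] : Prop :=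
  IsNoetherianRing R ∧ (minGens R (maximalIdeal R) : WithBot ℕ∞) = ringKrullDim R

/-- A local ring is Gorenstein if it has finite injective dimension as a module over
itself. -/
def IsGorensteinLocalRing (R : Type) [CommRing R] [IsLocalRing R] : Prop :=
  HasFiniteInjDim R R

/-- `ω` is a canonical module of the `d`-dimensional Cohen–Macaulay local ring `R`:
`ω` is finitely generated and `dim_k Ext_R^i(k, ω) = δ_{i,d}`, i.e. `Ext_R^i(k, ω) = 0`
for `i ≠ d` and `Ext_R^d(k, ω) ≅ k`. -/
def IsCanonicalModule (R : Type) [CommRing R] [IsLocalRing R] (d : ℕ)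
    (ω : Type) [AddCommGroup ω] [Module R ω] : Prop :=
  Module.Finite R ω ∧
    (∀ i : ℕ, i ≠ d →
      ExtVanishes R (ModuleCat.of R (ResidueField R)) (ModuleCat.of R ω) i) ∧
    Nonempty ((((Ext R (ModuleCat R) d).obj
        (Opposite.op (ModuleCat.of R (ResidueField R)))).obj (ModuleCat.of R ω))
        ≃ₗ[R] ResidueField R)

/-- `M` has Gorenstein dimension zero: the natural map `M → M**` is bijective and
`Ext_R^i(M, R) = 0 = Ext_R^i(M*, R)` for all `i ≥ 1`. -/
def IsGdimZero (R : Type) [CommRing R] (M : Type) [AddCommGroup M] [Module R M] : Prop :=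
  Function.Bijective (Module.Dual.eval R M) ∧
    ∀ i : ℕ, 1 ≤ i →
      ExtVanishes R (ModuleCat.of R M) (ModuleCat.of R R) i ∧
      ExtVanishes R (ModuleCat.of R (Module.Dual R M)) (ModuleCat.of R R) i

end

/-! Depth zero means that every element of `m` is a zero divisor, so by prime avoidance `m` is an
associated prime of `R`: some `x ≠ 0` satisfies `x m = 0`. A syzygy `Ω_n(M)` with `n ≥ 1` lies
inside `m F` for a free module `F`, hence is killed by `x`, and so is every quotient `L` of a sum
of such syzygies. Then `x` lies in the kernel of `R → Hom_R(L, L)`, which is therefore not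
injective. -/

open RingTheory.Sequence in
theorem disjoint_maximalIdeal_nonZeroDivisors_of_moduleDepth_eq_zero
    (R : Type) [CommRing R] [IsLocalRing R] (hdepth : moduleDepth R R = 0) :
    Disjoint (maximalIdeal R : Set R) (nonZeroDivisors R) := by
  refine Set.disjoint_left.mpr fun a ha hreg => ?_
  have hseq : IsRegular R [a] := by
    rw [IsLocalRing.isRegular_iff_isWeaklyRegular_of_subset_maximalIdeal (by simpa using ha),
      isWeaklyRegular_singleton_iff]
    exact (isRegular_iff_mem_nonZeroDivisors.mpr hreg).left
  have : (1 : ℕ∞) ≤ moduleDepth R R := le_sSup ⟨[a], by simp, by simpa using ha, hseq⟩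
  simp [hdepth] at this

theorem smul_eq_zero_of_mem_smul_top {R F : Type*} [CommRing R] [AddCommGroup F] [Module R F]
    {I : Ideal R} {x : R} (hx : x ∈ Module.annihilator R I) {v : F}
    (hv : v ∈ I • (⊤ : Submodule R F)) : x • v = 0 :=
  Submodule.smul_induction_on hv
    (fun a ha w _ => by
      have hxa : x * a = 0 := congrArg Subtype.val (Module.mem_annihilator.mp hx ⟨a, ha⟩)
      rw [smul_smul, hxa, zero_smul])
    (fun u w hu hw => by rw [smul_add, hu, hw, add_zero])

theorem IsMinimalSyzygy.smul_eq_zero {R : Type} [CommRing R] [IsLocalRing R] {x : R}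
    (hx : x ∈ Module.annihilator R (maximalIdeal R)) :
    ∀ {n : ℕ} {M S : ModuleCat.{0} R}, IsMinimalSyzygy R (n + 1) M S → ∀ s : S, x • s = 0
  | 0, _, _, ⟨_, _, _, _, _, hker, ⟨e⟩⟩, s =>
    e.injective <| by
      rw [map_smul, map_zero]
      exact Subtype.ext (smul_eq_zero_of_mem_smul_top hx (hker (e s).2))
  | _ + 1, _, _, ⟨_, _, _, _, _, _, hS⟩, s => smul_eq_zero hx hS s

theorem IsQuotOfSyzygies.smul_eq_zero {R : Type} [CommRing R] [IsLocalRing R]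
    {M L : Type} [AddCommGroup M] [Module R M] [AddCommGroup L] [Module R L]
    (hquot : IsQuotOfSyzygies R M L 1) {x : R} (hx : x ∈ Module.annihilator R (maximalIdeal R))
    (l : L) : x • l = 0 := by
  obtain ⟨ι, _, n, S, hn, hsyz, g, hg⟩ := hquot
  obtain ⟨d, rfl⟩ := hg l
  suffices x • d = 0 by rw [← map_smul, this, map_zero]
  refine DFinsupp.ext fun i => ?_
  obtain ⟨k, hk⟩ := Nat.exists_eq_add_of_le' (hn i)
  exact IsMinimalSyzygy.smul_eq_zero hx (hk ▸ hsyz i) (d i)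

theorem stmt_3_general (R : Type) [CommRing R] [IsLocalRing R] [IsNoetherianRing R]
    (hdepth : moduleDepth R R = 0)
    (M : Type) [AddCommGroup M] [Module R M]
    (L : Type) [AddCommGroup L] [Module R L]
    (hquot : IsQuotOfSyzygies R M L 1) :
    ¬ IsSemidualizing R L := by
  rintro ⟨-, hbij, -⟩
  obtain ⟨x, hx, hx0⟩ := SetLike.exists_of_lt <|
    Ideal.bot_lt_annihilator_of_disjoint_nonZeroDivisors <|
      disjoint_maximalIdeal_nonZeroDivisors_of_moduleDepth_eq_zero R hdepth
  refine hx0 <| (Submodule.mem_bot R).mpr <| hbij.injective ?_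
  ext l
  simp [hquot.smul_eq_zero hx l]

/-- Over a Noetherian local ring of depth zero, a non-zero homomorphic
image of a finite direct sum of syzygy modules `Ω_n^R(M)` (`n ≥ 1`) of a finitely
generated module `M` is never a semidualizing module. -/
theorem stmt_3 (R : Type) [CommRing R] [IsLocalRing R] [IsNoetherianRing R]
    (hdepth : moduleDepth R R = 0)
    (M : Type) [AddCommGroup M] [Module R M] [Module.Finite R M]
    (L : Type) [AddCommGroup L] [Module R L] [Module.Finite R L]
    (hL0 : Nontrivial L)
    (hquot : IsQuotOfSyzygies R M L 1) :
    ¬ IsSemidualizing R L :=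
  stmt_3_general R hdepth M L hquot
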